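/- Let d₁ be a natural number, d = 2·d₁, η : Fin d₁ → ℝ with η k > 0 for all k, O a real orthogonal d×d matrix (Oᵀ * O = 1), and Λ = Oᵀ * Σ(η) * O. Then for every μ : Fin d → ℝ and every t ∈ ℝ, setting w = (2 : ℝ) • ((Λᵀ)⁻¹.mulVec μ), the following equality of real numbers holds: ( ∏_{k<d₁} (cosh(η k · t/2))⁻¹ ) · exp( − ∑_{k<d₁} (η k /4) · ( ((O.mulVec w)(2k))² + ((O.mulVec w)(2k+1))² ) · tanh(η k · t/2) ) = ( ∏_{k<d₁} (cosh(η k · t/2))⁻¹ ) · exp( − ∑_{k<d₁} (1/(η k)) · ( ((O.mulVec μ)(2k))² + ((O.mulVec μ)(2k+1))² ) · tanh(η k · t/2) ). -/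

import Mathlib

/-!
Since `Λᵀ = Oᵀ Σ(-η) O` with `O` orthogonal, the equation `Λᵀ w = 2μ` becomes
`Σ(-η) (O w) = 2 O μ`. On each coordinate pair `(2k, 2k+1)` the matrix `Σ(-η)` acts as `η k`
times a quarter turn, so it multiplies the squared length of the pair by `η k ^ 2`. Hence
`4 ‖(Oμ)ₖ‖² = η k ^ 2 ‖(Ow)ₖ‖²`, which turns each summand on the left into the one on the right.
Invertibility of `Λ`, needed to cancel the inverse in `w`, is injectivity of `Σ(-η)`.
-/

open Matrix

/-- The canonical skew block matrix `Σ(η)` of size `d × d` determined by `η : Fin d₁ → ℝ`: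
its only nonzero entries are `Σ(η) (2k) (2k+1) = -η k` and `Σ(η) (2k+1) (2k) = η k`
for `k < d₁` (0-based indices). -/
def canonicalSkew (d d₁ : ℕ) (η : Fin d₁ → ℝ) : Matrix (Fin d) (Fin d) ℝ :=
  Matrix.of fun i j =>
    if h : i.val / 2 < d₁ ∧ i.val / 2 = j.val / 2 then
      if i.val % 2 = 0 ∧ j.val % 2 = 1 then -η ⟨i.val / 2, h.1⟩
      else if i.val % 2 = 1 ∧ j.val % 2 = 0 then η ⟨i.val / 2, h.1⟩
      else 0
    else 0

/-- For `d = 2·d₁` and `k : Fin d₁`, the index `2k` viewed in `Fin (2d₁)`. -/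
def idx0 {d₁ : ℕ} (k : Fin d₁) : Fin (2 * d₁) :=
  ⟨2 * k.val, by have := k.isLt; omega⟩

/-- For `d = 2·d₁` and `k : Fin d₁`, the index `2k+1` viewed in `Fin (2d₁)`. -/
def idx1 {d₁ : ℕ} (k : Fin d₁) : Fin (2 * d₁) :=
  ⟨2 * k.val + 1, by have := k.isLt; omega⟩

section CanonicalSkew

variable {d₁ : ℕ} (η : Fin d₁ → ℝ)

theorem canonicalSkew_transpose (d : ℕ) :
    (canonicalSkew d d₁ η)ᵀ = canonicalSkew d d₁ (-η) := by
  ext i j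
  simp only [transpose_apply, canonicalSkew, of_apply, Pi.neg_apply]
  by_cases h : j.val / 2 = i.val / 2
  · simp only [h]
    split_ifs <;> first | omega | simp
  · rw [dif_neg (by omega), dif_neg (by omega)]

theorem exists_eq_idx0_or_eq_idx1 (i : Fin (2 * d₁)) : ∃ k, i = idx0 k ∨ i = idx1 k :=
  ⟨⟨i / 2, by omega⟩, by
    rcases Nat.mod_two_eq_zero_or_one i with h | h
    · exact .inl (Fin.ext (by simp only [idx0]; omega))
    · exact .inr (Fin.ext (by simp only [idx1]; omega))⟩

theorem canonicalSkew_idx0_apply (k : Fin d₁) (j : Fin (2 * d₁)) :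
    canonicalSkew (2 * d₁) d₁ η (idx0 k) j = if j = idx1 k then -η k else 0 := by
  simp only [canonicalSkew, of_apply, idx0, idx1, Fin.ext_iff,
    Nat.mul_div_cancel_left _ two_pos]
  split_ifs <;> first | omega | simp

theorem canonicalSkew_idx1_apply (k : Fin d₁) (j : Fin (2 * d₁)) :
    canonicalSkew (2 * d₁) d₁ η (idx1 k) j = if j = idx0 k then η k else 0 := by
  have hk : (2 * k.val + 1) / 2 = k := by omega
  simp only [canonicalSkew, of_apply, idx0, idx1, Fin.ext_iff, hk]
  split_ifs <;> first | omega | simp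

theorem canonicalSkew_mulVec_idx0 (x : Fin (2 * d₁) → ℝ) (k : Fin d₁) :
    (canonicalSkew (2 * d₁) d₁ η *ᵥ x) (idx0 k) = -η k * x (idx1 k) := by
  simp [mulVec, dotProduct, canonicalSkew_idx0_apply]

theorem canonicalSkew_mulVec_idx1 (x : Fin (2 * d₁) → ℝ) (k : Fin d₁) :
    (canonicalSkew (2 * d₁) d₁ η *ᵥ x) (idx1 k) = η k * x (idx0 k) := by
  simp [mulVec, dotProduct, canonicalSkew_idx1_apply]

theorem det_canonicalSkew_ne_zero (hη : ∀ k, η k ≠ 0) :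
    (canonicalSkew (2 * d₁) d₁ η).det ≠ 0 := by
  rw [Ne, ← exists_mulVec_eq_zero_iff]
  rintro ⟨x, hx, hSx⟩
  refine hx (funext fun i => ?_)
  obtain ⟨k, rfl | rfl⟩ := exists_eq_idx0_or_eq_idx1 i
  · simpa [canonicalSkew_mulVec_idx1, hη k] using congrFun hSx (idx1 k)
  · simpa [canonicalSkew_mulVec_idx0, hη k] using congrFun hSx (idx0 k)

theorem sq_canonicalSkew_mulVec_idx0_add_sq_idx1 (x : Fin (2 * d₁) → ℝ) (k : Fin d₁) :
    (canonicalSkew (2 * d₁) d₁ η *ᵥ x) (idx0 k) ^ 2 +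
        (canonicalSkew (2 * d₁) d₁ η *ᵥ x) (idx1 k) ^ 2 =
      η k ^ 2 * (x (idx0 k) ^ 2 + x (idx1 k) ^ 2) := by
  rw [canonicalSkew_mulVec_idx0, canonicalSkew_mulVec_idx1]
  ring

end CanonicalSkew

theorem det_transpose_mul_mul_of_transpose_mul_eq_one {n : Type*} [Fintype n] [DecidableEq n]
    {R : Type*} [CommRing R] {O : Matrix n n R} (hO : Oᵀ * O = 1) (S : Matrix n n R) :
    (Oᵀ * S * O).det = S.det := by
  rw [det_mul, det_mul, mul_right_comm, ← det_mul, hO, det_one, one_mul]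

/-- Substituting `w = 2(Λᵀ)⁻¹μ` into the conditional characteristic function of the
Lévy area yields the joint characteristic function of Brownian motion coupled with its
Lévy area in the non-degenerate case. -/
theorem levy_char_substitution (d₁ : ℕ) (η : Fin d₁ → ℝ) (hη : ∀ k, 0 < η k)
    (O : Matrix (Fin (2 * d₁)) (Fin (2 * d₁)) ℝ) (hO : Oᵀ * O = 1)
    (Λ : Matrix (Fin (2 * d₁)) (Fin (2 * d₁)) ℝ)
    (hΛ : Λ = Oᵀ * canonicalSkew (2 * d₁) d₁ η * O)
    (μ : Fin (2 * d₁) → ℝ) (t : ℝ)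
    (w : Fin (2 * d₁) → ℝ) (hw : w = (2 : ℝ) • ((Λᵀ)⁻¹.mulVec μ)) :
    (∏ k : Fin d₁, (Real.cosh (η k * t / 2))⁻¹) *
      Real.exp (-∑ k : Fin d₁, (η k / 4) *
        ((O.mulVec w (idx0 k)) ^ 2 + (O.mulVec w (idx1 k)) ^ 2) *
        Real.tanh (η k * t / 2)) =
    (∏ k : Fin d₁, (Real.cosh (η k * t / 2))⁻¹) *
      Real.exp (-∑ k : Fin d₁, (1 / η k) *
        ((O.mulVec μ (idx0 k)) ^ 2 + (O.mulVec μ (idx1 k)) ^ 2) *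
        Real.tanh (η k * t / 2)) := by
  have hΛt : Λᵀ = Oᵀ * canonicalSkew (2 * d₁) d₁ (-η) * O := by
    rw [hΛ, transpose_mul, transpose_mul, transpose_transpose, canonicalSkew_transpose,
      Matrix.mul_assoc]
  have hdet : IsUnit Λᵀ.det := by
    rw [hΛt, det_transpose_mul_mul_of_transpose_mul_eq_one hO]
    exact (det_canonicalSkew_ne_zero _ fun k => neg_ne_zero.mpr (hη k).ne').isUnit
  have hSOw : canonicalSkew (2 * d₁) d₁ (-η) *ᵥ (O *ᵥ w) = (2 : ℝ) • (O *ᵥ μ) := by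
    calc canonicalSkew (2 * d₁) d₁ (-η) *ᵥ (O *ᵥ w) = O *ᵥ (Λᵀ *ᵥ w) := by
          rw [hΛt, mulVec_mulVec, mulVec_mulVec, ← Matrix.mul_assoc, ← Matrix.mul_assoc,
            mul_eq_one_comm.mp hO, Matrix.one_mul]
      _ = (2 : ℝ) • (O *ᵥ μ) := by
          rw [hw, mulVec_smul, mulVec_mulVec, mul_nonsing_inv _ hdet, one_mulVec, mulVec_smul]
  congr 3
  refine Finset.sum_congr rfl fun k _ => ?_
  have hk := sq_canonicalSkew_mulVec_idx0_add_sq_idx1 (-η) (O *ᵥ w) k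
  rw [hSOw] at hk
  simp only [Pi.smul_apply, smul_eq_mul, Pi.neg_apply, neg_sq, mul_pow] at hk
  have hηk : η k ≠ 0 := (hη k).ne'
  field_simp
  linear_combination (-Real.tanh (η k * t / 2)) * hk
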